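/- arXiv:2202.03166 — 8 statements merged into one kernel-verified Lean document; each statement's English description precedes it below -/
import Mathlib

section
/- Separation Theorem for posets: Let P be a poset, I an ideal of P, and F a prime filter of P with I ∩ F = ∅. Then there exists a prime ideal J of P with I ⊆ J and J ∩ F = ∅. -/
open Set

variable {P : Type*}

def LSet [PartialOrder P] (a b : P) : Set P := {x | x ≤ a ∧ x ≤ b}

def USet [PartialOrder P] (a b : P) : Set P := {x | a ≤ x ∧ b ≤ x}

/-- An ideal: nonempty, downward closed, any two elements have an upper bound inside. -/
def IsIdealP [PartialOrder P] (I : Set P) : Prop :=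
  I.Nonempty ∧ (∀ ⦃x y : P⦄, x ∈ I → y ≤ x → y ∈ I) ∧
    ∀ x ∈ I, ∀ y ∈ I, (USet x y ∩ I).Nonempty

/-- A filter: nonempty, upward closed, any two elements have a lower bound inside. -/
def IsFilterP [PartialOrder P] (F : Set P) : Prop :=
  F.Nonempty ∧ (∀ ⦃x y : P⦄, x ∈ F → x ≤ y → y ∈ F) ∧
    ∀ x ∈ F, ∀ y ∈ F, (LSet x y ∩ F).Nonempty

def IsPrimeIdealP [PartialOrder P] (I : Set P) : Prop :=
  IsIdealP I ∧ I ≠ Set.univ ∧ ∀ a b : P, LSet a b ⊆ I → a ∈ I ∨ b ∈ I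

def IsPrimeFilterP [PartialOrder P] (F : Set P) : Prop :=
  IsFilterP F ∧ F ≠ Set.univ ∧ ∀ a b : P, USet a b ⊆ F → a ∈ F ∨ b ∈ F

/-- A *-ideal: an ideal of the form F₊ = {x | x* ∈ F} for some filter F. -/
def IsStarIdealP [PartialOrder P] (star : P → P) (I : Set P) : Prop :=
  IsIdealP I ∧ ∃ F : Set P, IsFilterP F ∧ {x : P | star x ∈ F} = I

theorem stmt4 [PartialOrder P] (I F : Set P) (hI : IsIdealP I)
    (hF : IsPrimeFilterP F) (hIF : I ∩ F = ∅) :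
    ∃ J : Set P, IsPrimeIdealP J ∧ I ⊆ J ∧ J ∩ F = ∅ := by
  obtain ⟨⟨hFne, hFup, hFdir⟩, hFuniv, hFprime⟩ := hF
  refine ⟨Fᶜ, ⟨⟨?_, ?_, ?_⟩, ?_, ?_⟩, ?_, ?_⟩
  · -- nonempty
    rw [Set.nonempty_compl]; exact hFuniv
  · -- downward closed
    intro x y hx hyx hyF
    exact hx (hFup hyF hyx)
  · -- directed
    intro x hx y hy
    have := hFprime x y
    by_contra h
    rw [Set.not_nonempty_iff_eq_empty] at h
    have hsub : USet x y ⊆ F := by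
      intro z hz
      by_contra hzF
      exact absurd h (Set.nonempty_iff_ne_empty.mp ⟨z, hz, hzF⟩)
    rcases this hsub with h1 | h1
    · exact hx h1
    · exact hy h1
  · -- not univ
    obtain ⟨f, hf⟩ := hFne
    intro h
    have : f ∈ Fᶜ := h ▸ Set.mem_univ f
    exact this hf
  · -- prime
    intro a b hab
    by_contra h
    push_neg at h
    obtain ⟨ha, hb⟩ := h
    simp only [Set.mem_compl_iff, not_not] at ha hb
    obtain ⟨z, hz, hzF⟩ := hFdir a ha b hb
    exact (hab hz) hzF
  · -- I ⊆ Fᶜ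
    intro x hx hxF
    exact absurd hIF (Set.nonempty_iff_ne_empty.mp ⟨x, hx, hxF⟩)
  · exact Set.compl_inter_self F
end

section
/- Let P be a pseudocomplemented poset and I an ideal of P such that (ii) a ∈ I implies a** ∈ I, and (iii) for all x ∈ P and y ∈ I, x* ≤ y implies y* ≤ x. Then I is a *-ideal of P, i.e., I₊ := {x | x* ∈ I} is a filter of P and (I₊)₊ = I. -/
open Set

variable {P : Type*}

theorem stmt10 [PartialOrder P] [OrderBot P] (star : P → P)
    (hstar : ∀ a x : P, LSet a x = {⊥} ↔ x ≤ star a)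
    (I : Set P) (hI : IsIdealP I)
    (h2 : ∀ a ∈ I, star (star a) ∈ I)
    (h3 : ∀ x : P, ∀ y ∈ I, star x ≤ y → star y ≤ x) :
    IsFilterP {x : P | star x ∈ I} ∧
      {x : P | star x ∈ {y : P | star y ∈ I}} = I := by
  obtain ⟨⟨a0, ha0⟩, hdown, hub⟩ := hI
  have hself : ∀ a : P, LSet a (star a) = {⊥} := fun a => (hstar a (star a)).mpr le_rfl
  have hle2 : ∀ a : P, a ≤ star (star a) := by
    intro a
    apply (hstar (star a) a).mp
    rw [← hself a]
    ext x
    exact ⟨fun h => ⟨h.2, h.1⟩, fun h => ⟨h.2, h.1⟩⟩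
  have hanti : ∀ a b : P, a ≤ b → star b ≤ star a := by
    intro a b hab
    apply (hstar a (star b)).mp
    apply Set.eq_singleton_iff_unique_mem.mpr
    refine ⟨⟨bot_le, bot_le⟩, fun x hx => ?_⟩
    have : x ∈ LSet b (star b) := ⟨hx.1.trans hab, hx.2⟩
    rw [hself b] at this
    exact this
  constructor
  · refine ⟨⟨star a0, h2 a0 ha0⟩, ?_, ?_⟩
    · intro x y hx hxy
      exact hdown hx (hanti x y hxy)
    · intro x hx y hy
      obtain ⟨z, ⟨hxz, hyz⟩, hzI⟩ := hub _ hx _ hy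
      exact ⟨star z, ⟨h3 x z hzI hxz, h3 y z hzI hyz⟩, h2 z hzI⟩
  · ext x
    exact ⟨fun hx => hdown hx (hle2 x), fun hx => h2 x hx⟩
end

section
/- Let P be a pseudocomplemented poset and F a filter of P. Then F₊ := {x ∈ P | x* ∈ F} is an ideal of P (and indeed a *-ideal, since F₊ = G₊ for the filter G = F). -/
open Set

variable {P : Type*}

theorem stmt11 [PartialOrder P] [OrderBot P] (star : P → P)
    (hstar : ∀ a x : P, LSet a x = {⊥} ↔ x ≤ star a)
    (F : Set P) (hF : IsFilterP F) :
    IsIdealP {x : P | star x ∈ F} ∧ IsStarIdealP star {x : P | star x ∈ F} := by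

  have hanti : ∀ a b : P, a ≤ b → star b ≤ star a := by
    intro a b hab
    rw [← hstar]
    ext y
    simp only [LSet, Set.mem_setOf_eq, Set.mem_singleton_iff]
    constructor
    · rintro ⟨h1, h2⟩
      have : y ∈ LSet b (star b) := ⟨h1.trans hab, h2⟩
      rwa [(hstar b (star b)).mpr le_rfl] at this
    · rintro rfl; exact ⟨bot_le, bot_le⟩
  have hdd : ∀ a : P, a ≤ star (star a) := by
    intro a
    rw [← hstar]
    ext y
    simp only [LSet, Set.mem_setOf_eq, Set.mem_singleton_iff]
    constructor
    · rintro ⟨h1, h2⟩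
      have : y ∈ LSet a (star a) := ⟨h2, h1⟩
      rwa [(hstar a (star a)).mpr le_rfl] at this
    · rintro rfl; exact ⟨bot_le, bot_le⟩
  obtain ⟨⟨f, hf⟩, hup, hlb⟩ := hF
  have hbot : star ⊥ ∈ F := by
    apply hup hf
    rw [← hstar]
    ext y
    simp only [LSet, Set.mem_setOf_eq, Set.mem_singleton_iff]
    exact ⟨fun h => le_bot_iff.mp h.1, fun h => by subst h; exact ⟨le_rfl, bot_le⟩⟩
  have hI : IsIdealP {x : P | star x ∈ F} := by
    refine ⟨⟨⊥, hbot⟩, ?_, ?_⟩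
    · intro x y hx hyx
      exact hup hx (hanti _ _ hyx)
    · intro x hx y hy
      obtain ⟨z, ⟨hzx, hzy⟩, hzF⟩ := hlb _ hx _ hy
      refine ⟨star z, ⟨?_, ?_⟩, hup hzF (hdd z)⟩
      · exact (hdd x).trans (hanti _ _ hzx)
      · exact (hdd y).trans (hanti _ _ hzy)
  exact ⟨hI, hI, F, ⟨⟨f, hf⟩, hup, hlb⟩, rfl⟩
end

section
/- Let P be a pseudocomplemented poset and a ∈ P. Then (a*] = [a)₊, i.e., {x | x ≤ a*} = {x | a ≤ x*}, and this set is a *-ideal of P. -/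
open Set

variable {P : Type*}

theorem stmt12 [PartialOrder P] [OrderBot P] (star : P → P)
    (hstar : ∀ a x : P, LSet a x = {⊥} ↔ x ≤ star a)
    (a : P) :
    Set.Iic (star a) = {x : P | star x ∈ Set.Ici a} ∧
      IsStarIdealP star (Set.Iic (star a)) := by
  have hcomm : ∀ u v : P, LSet u v = LSet v u := by
    intro u v
    ext z; simp [LSet, and_comm]
  have key : ∀ x : P, x ≤ star a ↔ a ≤ star x := by
    intro x
    rw [← hstar, hcomm, hstar]
  have hset : Set.Iic (star a) = {x : P | star x ∈ Set.Ici a} := by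
    ext x
    simp only [Set.mem_Iic, Set.mem_setOf_eq, Set.mem_Ici]
    exact key x
  refine ⟨hset, ?_, Set.Ici a, ?_, hset.symm⟩
  · refine ⟨⟨⊥, bot_le⟩, fun x y hx hyx => le_trans hyx hx, ?_⟩
    intro x hx y hy
    exact ⟨star a, ⟨hx, hy⟩, le_refl _⟩
  · refine ⟨⟨a, le_refl a⟩, fun x y hx hxy => le_trans hx hxy, ?_⟩
    intro x hx y hy
    exact ⟨a, ⟨hx, hy⟩, le_refl a⟩
end

section
/- Let P be a pseudocomplemented poset and a ∈ P. Then the following are equivalent: (i) a is Boolean (a** = a); (ii) the principal ideal (a] is a *-ideal of P; (iii) every ideal of P containing a contains a**. -/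
open Set

variable {P : Type*}

lemma lset_comm [PartialOrder P] (a b : P) : LSet a b = LSet b a := by
  ext x; exact and_comm

lemma le_sstar [PartialOrder P] [OrderBot P] (star : P → P)
    (hstar : ∀ a x : P, LSet a x = {⊥} ↔ x ≤ star a) (a : P) :
    a ≤ star (star a) := by
  rw [← hstar, lset_comm, hstar]

lemma star_anti [PartialOrder P] [OrderBot P] (star : P → P)
    (hstar : ∀ a x : P, LSet a x = {⊥} ↔ x ≤ star a) {a b : P} (h : a ≤ b) :
    star b ≤ star a := by
  rw [← hstar]
  have hb : LSet b (star b) = {⊥} := (hstar b (star b)).2 le_rfl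
  apply Set.eq_singleton_iff_unique_mem.2
  refine ⟨⟨bot_le, bot_le⟩, fun x hx => ?_⟩
  have : x ∈ LSet b (star b) := ⟨hx.1.trans h, hx.2⟩
  rw [hb] at this; exact this

theorem stmt14 [PartialOrder P] [OrderBot P] (star : P → P)
    (hstar : ∀ a x : P, LSet a x = {⊥} ↔ x ≤ star a)
    (a : P) :
    (star (star a) = a ↔ IsStarIdealP star (Set.Iic a)) ∧
      (IsStarIdealP star (Set.Iic a) ↔
        ∀ I : Set P, IsIdealP I → a ∈ I → star (star a) ∈ I) := by
  have hIic : IsIdealP (Set.Iic a) :=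
    ⟨⟨a, le_rfl⟩, fun x y hx hyx => le_trans hyx hx,
      fun x hx y hy => ⟨a, ⟨hx, hy⟩, le_rfl⟩⟩
  have e12 : star (star a) = a → IsStarIdealP star (Set.Iic a) := by
    intro h
    refine ⟨hIic, Set.Ici (star a),
      ⟨⟨star a, le_rfl⟩, fun x y hx hxy => le_trans hx hxy,
        fun x hx y hy => ⟨star a, ⟨hx, hy⟩, le_rfl⟩⟩, ?_⟩
    ext x
    simp only [Set.mem_setOf_eq, Set.mem_Ici, Set.mem_Iic]
    constructor
    · intro hx
      calc x ≤ star (star x) := le_sstar star hstar x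
        _ ≤ star (star a) := star_anti star hstar hx
        _ = a := h
    · intro hx; exact star_anti star hstar hx
  have e21 : IsStarIdealP star (Set.Iic a) → star (star a) = a := by
    rintro ⟨_, F, hF, hFeq⟩
    have ha : star a ∈ F := by
      have : a ∈ {x | star x ∈ F} := by rw [hFeq]; exact Set.mem_Iic.2 le_rfl
      exact this
    have h2 : star (star a) ∈ Set.Iic a := by
      rw [← hFeq]
      show star (star (star a)) ∈ F
      have heq : star (star (star a)) = star a :=
        le_antisymm (star_anti star hstar (le_sstar star hstar a))
          (le_sstar star hstar (star a))
      rw [heq]; exact ha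
    exact le_antisymm h2 (le_sstar star hstar a)
  constructor
  · exact ⟨e12, e21⟩
  · constructor
    · intro h I hI haI
      rw [e21 h]; exact haI
    · intro h
      apply e12
      exact le_antisymm (h (Set.Iic a) hIic (Set.mem_Iic.2 le_rfl))
        (le_sstar star hstar a)
end

section
/- Let P be a pseudocomplemented poset and F a prime filter of P containing all dense elements. Then F satisfies the *-condition: for every a ∈ P, exactly one of a ∈ F and a* ∈ F holds. -/
open Set

variable {P : Type*}

theorem stmt17 [PartialOrder P] [OrderBot P] (star : P → P)
    (hstar : ∀ a x : P, LSet a x = {⊥} ↔ x ≤ star a)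
    (F : Set P) (hF : IsPrimeFilterP F) (hdense : ∀ a : P, star a = ⊥ → a ∈ F) :
    ∀ a : P, Xor' (a ∈ F) (star a ∈ F) := by
  obtain ⟨⟨hne, hup, hlow⟩, hFne, hprime⟩ := hF
  intro a
  have hL : LSet a (star a) = {⊥} := (hstar a (star a)).2 le_rfl
  have hnotboth : ¬ (a ∈ F ∧ star a ∈ F) := by
    rintro ⟨ha, hs⟩
    obtain ⟨z, hz, hzF⟩ := hlow a ha (star a) hs
    rw [hL] at hz
    subst hz
    apply hFne
    ext x; simp only [Set.mem_univ, iff_true]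
    exact hup hzF bot_le
  have hor : a ∈ F ∨ star a ∈ F := by
    apply hprime
    intro x ⟨hax, hsx⟩
    apply hdense
    have h1 : LSet a (star x) = {⊥} := by
      ext y; constructor
      · rintro ⟨h1, h2⟩
        have : y ∈ LSet x (star x) := ⟨h1.trans hax, h2⟩
        rwa [(hstar x (star x)).2 le_rfl] at this
      · rintro rfl; exact ⟨bot_le, bot_le⟩
    have h2 : star x ≤ star a := (hstar a (star x)).1 h1
    have h3 : star x ∈ LSet x (star x) := ⟨h2.trans hsx, le_rfl⟩
    rwa [(hstar x (star x)).2 le_rfl] at h3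
  rcases hor with h | h
  · exact Or.inl ⟨h, fun hs => hnotboth ⟨h, hs⟩⟩
  · exact Or.inr ⟨h, fun ha => hnotboth ⟨ha, h⟩⟩
end

section
/- Let P be a pseudocomplemented poset and F a proper filter of P satisfying the *-condition (for every x ∈ P, exactly one of x ∈ F and x* ∈ F). Then F is an ultrafilter of P, i.e., a maximal proper filter. -/
open Set

variable {P : Type*}

theorem stmt18 [PartialOrder P] [OrderBot P] (star : P → P)
    (hstar : ∀ a x : P, LSet a x = {⊥} ↔ x ≤ star a)
    (F : Set P) (hF : IsFilterP F) (hproper : F ≠ Set.univ)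
    (hstarcond : ∀ x : P, Xor' (x ∈ F) (star x ∈ F)) :
    ∀ G : Set P, IsFilterP G → G ≠ Set.univ → F ⊆ G → F = G := by
  intro G hG hGproper hFG
  by_contra hne
  obtain ⟨x, hxG, hxF⟩ : ∃ x, x ∈ G ∧ x ∉ F := by
    by_contra h
    push_neg at h
    exact hne (Set.Subset.antisymm hFG h)
  have hsx : star x ∈ F := by
    rcases hstarcond x with ⟨h1, _⟩ | ⟨h1, _⟩
    · exact absurd h1 hxF
    · exact h1
  have hL : LSet x (star x) = {⊥} := (hstar x (star x)).mpr le_rfl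
  obtain ⟨z, hz, hzG⟩ := hG.2.2 x hxG (star x) (hFG hsx)
  rw [hL] at hz
  rw [Set.mem_singleton_iff] at hz
  subst hz
  apply hGproper
  ext y
  simp only [Set.mem_univ, iff_true]
  exact hG.2.1 hzG bot_le
end

section
/- Separation Theorem for *-ideals: Let P be a pseudocomplemented poset, I an ideal of P, and F a proper filter of P satisfying the *-condition (for every x ∈ P, exactly one of x ∈ F and x* ∈ F), with I ∩ F = ∅. Then there exists a *-ideal J of P with I ⊆ J and J ∩ F = ∅; indeed J := F₊ = P \ F works. -/
open Set

variable {P : Type*}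

theorem stmt19 [PartialOrder P] [OrderBot P] (star : P → P)
    (hstar : ∀ a x : P, LSet a x = {⊥} ↔ x ≤ star a)
    (I F : Set P) (hI : IsIdealP I) (hF : IsFilterP F) (hproper : F ≠ Set.univ)
    (hstarcond : ∀ x : P, Xor' (x ∈ F) (star x ∈ F))
    (hIF : I ∩ F = ∅) :
    ∃ J : Set P, IsStarIdealP star J ∧ I ⊆ J ∧ J ∩ F = ∅ ∧
      J = {x : P | star x ∈ F} ∧ J = Fᶜ := by
  -- J = Fᶜ; first note Fᶜ = {x | star x ∈ F} from the *-condition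
  have hset : {x : P | star x ∈ F} = Fᶜ := by
    ext x
    have h := hstarcond x
    simp only [Set.mem_setOf_eq, Set.mem_compl_iff]
    rcases h with ⟨h1, h2⟩ | ⟨h1, h2⟩
    · exact ⟨fun hs => absurd hs h2, fun hn => absurd h1 hn⟩
    · exact ⟨fun _ h => h2 h, fun _ => h1⟩
  have hLsymm : ∀ a b : P, LSet a b = LSet b a := by
    intro a b; ext z; exact ⟨fun ⟨h1, h2⟩ => ⟨h2, h1⟩, fun ⟨h1, h2⟩ => ⟨h2, h1⟩⟩
  have hideal : IsIdealP (Fᶜ : Set P) := by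
    refine ⟨?_, ?_, ?_⟩
    · rcases Set.nonempty_compl.mpr hproper with ⟨x, hx⟩; exact ⟨x, hx⟩
    · intro x y hx hyx hy
      exact hx (hF.2.1 hy hyx)
    · intro x hx y hy
      have hsx : star x ∈ F := by
        rcases hstarcond x with ⟨h1, _⟩ | ⟨h1, _⟩
        · exact absurd h1 hx
        · exact h1
      have hsy : star y ∈ F := by
        rcases hstarcond y with ⟨h1, _⟩ | ⟨h1, _⟩
        · exact absurd h1 hy
        · exact h1
      rcases hF.2.2 _ hsx _ hsy with ⟨w, ⟨hw1, hw2⟩, hwF⟩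
      refine ⟨star w, ⟨?_, ?_⟩, ?_⟩
      · have : LSet w x = {⊥} := by rw [hLsymm]; exact (hstar x w).mpr hw1
        exact (hstar w x).mp this
      · have : LSet w y = {⊥} := by rw [hLsymm]; exact (hstar y w).mpr hw2
        exact (hstar w y).mp this
      · rcases hstarcond w with ⟨_, h2⟩ | ⟨_, h2⟩
        · exact h2
        · exact absurd hwF h2
  refine ⟨Fᶜ, ⟨hideal, F, hF, hset⟩, ?_, ?_, hset.symm, rfl⟩
  · intro x hxI hxF
    exact Set.eq_empty_iff_forall_notMem.mp hIF x ⟨hxI, hxF⟩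
  · simp [Set.compl_inter_self]
end
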